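/- arXiv:2205.13175 — 5 statements merged into one kernel-verified Lean document; each statement's English description precedes it below -/
import Mathlib

section
/- Let k₁, k₂, l₁, l₂ ∈ ℤ and define φ : ℝ² → ℝ⁴ by φ(u,v) = (1/√2)(cos(k₁u+k₂v), sin(k₁u+k₂v), cos(l₁u+l₂v), sin(l₁u+l₂v)). Set e = ½(k₁²+k₂²+l₁²+l₂²). Then the identity Δφ(u,v) + e·φ(u,v) = 0 holds for all (u,v) ∈ ℝ² if and only if k₁²+k₂² = l₁²+l₂². -/
/-!
Each component of `phiT` is a plane wave `c * f (p * u + q * v)` with `f'' = -f`, so the Laplacian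
multiplies it by `-(p² + q²)`: `Δφ = -(K φ₀, K φ₁, L φ₂, L φ₃)` with `K = k₁² + k₂²`, `L = l₁² + l₂²`.
Since `e = (K + L) / 2`, the components of `Δφ + e φ` are `±(L - K) / 2` times those of `φ`, and
`φ₀(0, 0) = 1 / √2 ≠ 0`.
-/

/-- The componentwise Euclidean Laplacian of a map `ℝ² → ℝ⁴`,
`Δf = ∂²f/∂u² + ∂²f/∂v²`. -/
noncomputable def lap2 (f : ℝ → ℝ → Fin 4 → ℝ) (u v : ℝ) : Fin 4 → ℝ :=
  fun i => iteratedDeriv 2 (fun u' => f u' v i) u + iteratedDeriv 2 (fun v' => f u v' i) v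

/-- The map `φ(u,v) = (1/√2)(cos(k₁u+k₂v), sin(k₁u+k₂v), cos(l₁u+l₂v), sin(l₁u+l₂v))`. -/
noncomputable def phiT (k₁ k₂ l₁ l₂ : ℤ) (u v : ℝ) : Fin 4 → ℝ :=
  fun i => (1 / Real.sqrt 2) *
    ![Real.cos ((k₁ : ℝ) * u + (k₂ : ℝ) * v), Real.sin ((k₁ : ℝ) * u + (k₂ : ℝ) * v),
      Real.cos ((l₁ : ℝ) * u + (l₂ : ℝ) * v), Real.sin ((l₁ : ℝ) * u + (l₂ : ℝ) * v)] i

open Real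

theorem iteratedDeriv_comp_mul_add {𝕜 : Type*} [NontriviallyNormedField 𝕜] {n : ℕ} {f : 𝕜 → 𝕜}
    (hf : ContDiff 𝕜 n f) (a b x : 𝕜) :
    iteratedDeriv n (fun x => f (a * x + b)) x = a ^ n * iteratedDeriv n f (a * x + b) := by
  have hshift : ContDiff 𝕜 n (fun y => f (y + b)) := hf.comp (contDiff_id.add contDiff_const)
  rw [iteratedDeriv_comp_const_mul hshift, iteratedDeriv_comp_add_const]

theorem iteratedDeriv_two_cos : iteratedDeriv 2 cos = -cos := by
  simp

theorem iteratedDeriv_two_sin : iteratedDeriv 2 sin = -sin := by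
  ext
  simp

theorem iteratedDeriv_two_planeWave_add {f : ℝ → ℝ} (hf : ContDiff ℝ 2 f) (c p q u v : ℝ) :
    iteratedDeriv 2 (fun u' => c * f (p * u' + q * v)) u
        + iteratedDeriv 2 (fun v' => c * f (p * u + q * v')) v
      = (p ^ 2 + q ^ 2) * (c * iteratedDeriv 2 f (p * u + q * v)) := by
  simp only [iteratedDeriv_const_mul_field, iteratedDeriv_comp_mul_add hf,
    fun v' => add_comm (p * u) (q * v')]
  ring

theorem lap2_phiT (k₁ k₂ l₁ l₂ : ℤ) (u v : ℝ) (i : Fin 4) :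
    lap2 (phiT k₁ k₂ l₁ l₂) u v i =
      -![(k₁ : ℝ) ^ 2 + (k₂ : ℝ) ^ 2, (k₁ : ℝ) ^ 2 + (k₂ : ℝ) ^ 2,
          (l₁ : ℝ) ^ 2 + (l₂ : ℝ) ^ 2, (l₁ : ℝ) ^ 2 + (l₂ : ℝ) ^ 2] i
        * phiT k₁ k₂ l₁ l₂ u v i := by
  fin_cases i <;>
  simp only [lap2, phiT, Fin.zero_eta, Fin.mk_one, Fin.reduceFinMk, Matrix.cons_val,
    iteratedDeriv_two_planeWave_add contDiff_cos, iteratedDeriv_two_planeWave_add contDiff_sin,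
    iteratedDeriv_two_cos, iteratedDeriv_two_sin, Pi.neg_apply] <;>
  ring

theorem stmt0 (k₁ k₂ l₁ l₂ : ℤ) :
    (∀ u v : ℝ, ∀ i : Fin 4,
        lap2 (phiT k₁ k₂ l₁ l₂) u v i
          + (((k₁ : ℝ) ^ 2 + (k₂ : ℝ) ^ 2 + (l₁ : ℝ) ^ 2 + (l₂ : ℝ) ^ 2) / 2)
              * phiT k₁ k₂ l₁ l₂ u v i = 0)
      ↔ k₁ ^ 2 + k₂ ^ 2 = l₁ ^ 2 + l₂ ^ 2 := by
  rw [← Int.cast_inj (α := ℝ)]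
  push_cast
  constructor
  · intro h
    have h₀ := h 0 0 0
    rw [lap2_phiT] at h₀
    simp only [phiT, Matrix.cons_val_zero, mul_zero, add_zero, cos_zero, mul_one] at h₀
    have hs : 1 / √2 ≠ 0 := by positivity
    have hgap : ((l₁ : ℝ) ^ 2 + l₂ ^ 2 - (k₁ ^ 2 + k₂ ^ 2)) / 2 * (1 / √2) = 0 := by
      linear_combination h₀
    linarith [(mul_eq_zero.mp hgap).resolve_right hs]
  · intro h u v i
    have hspec : ∀ j : Fin 4, ![(k₁ : ℝ) ^ 2 + (k₂ : ℝ) ^ 2, (k₁ : ℝ) ^ 2 + (k₂ : ℝ) ^ 2,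
        (l₁ : ℝ) ^ 2 + (l₂ : ℝ) ^ 2, (l₁ : ℝ) ^ 2 + (l₂ : ℝ) ^ 2] j = (k₁ : ℝ) ^ 2 + k₂ ^ 2 := by
      intro j; fin_cases j <;> simp [h]
    rw [lap2_phiT, hspec]
    linear_combination (-phiT k₁ k₂ l₁ l₂ u v i / 2) * h
end

section
/- Let m, n, k be positive integers and F : ℝ^{m+1} → ℝ^{n+1} a map each of whose components is a homogeneous polynomial of degree k. Assume that each component of F is harmonic (its Euclidean Laplacian vanishes identically) and that |F(x)|² = |x|^{2k} for all x ∈ ℝ^{m+1}. Then the squared Frobenius norm of the derivative of F satisfies |DF(x)|² = k(m+2k−1)|x|^{2(k−1)} for all x ∈ ℝ^{m+1}; in particular |DF|² is constant equal to k(m+2k−1) on the unit sphere S^m. -/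
/-!
STATEMENT 2: If F : ℝ^{m+1} → ℝ^{n+1} has components that are homogeneous
polynomials of degree k, each component is harmonic, and |F(x)|² = |x|^{2k}
for all x, then |DF(x)|² = k(m+2k−1)|x|^{2(k−1)} for all x; in particular
|DF|² is constant equal to k(m+2k−1) on the unit sphere S^m.
-/

/-- Partial derivative of a map `ℝⁿ → ℝᵐ` in the `j`-th coordinate direction. -/
noncomputable def pd {n m : ℕ} (F : (Fin n → ℝ) → (Fin m → ℝ)) (j : Fin n)
    (x : Fin n → ℝ) : Fin m → ℝ :=
  fderiv ℝ F x (Pi.single j 1)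

/-- Componentwise Euclidean Laplacian of a map `ℝⁿ → ℝᵐ`. -/
noncomputable def lap {n m : ℕ} (F : (Fin n → ℝ) → (Fin m → ℝ)) (x : Fin n → ℝ) :
    Fin m → ℝ :=
  fun i => ∑ j, pd (pd F j) j x i

/-- Squared Frobenius norm of the total derivative of `F` at `x`:
the sum of the squares of all first partial derivatives of all components. -/
noncomputable def frobSq {n m : ℕ} (F : (Fin n → ℝ) → (Fin m → ℝ)) (x : Fin n → ℝ) : ℝ :=
  ∑ i, ∑ j, (pd F j x i) ^ 2

section Aux

open MvPolynomial Finset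

lemma hasFDerivAt_mveval {ν : ℕ} (P : MvPolynomial (Fin ν) ℝ) (x : Fin ν → ℝ) :
    HasFDerivAt (fun y => eval y P)
      (∑ j, (eval x (pderiv j P)) • (ContinuousLinearMap.proj j : (Fin ν → ℝ) →L[ℝ] ℝ)) x := by
  induction P using MvPolynomial.induction_on with
  | C a =>
    simp only [eval_C, pderiv_C, map_zero, zero_smul, Finset.sum_const_zero]
    exact hasFDerivAt_const a x
  | add p q hp hq =>
    simp only [eval_add, map_add, add_smul, Finset.sum_add_distrib]
    exact hp.add hq
  | mul_X p i hp =>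
    have hi : HasFDerivAt (fun y : Fin ν → ℝ => y i)
        (ContinuousLinearMap.proj i : (Fin ν → ℝ) →L[ℝ] ℝ) x :=
      hasFDerivAt_apply i x
    have hmul := hp.mul hi
    simp only [eval_mul, eval_X] at hmul ⊢
    refine hmul.congr_fderiv ?_
    ext v
    simp only [ContinuousLinearMap.add_apply, ContinuousLinearMap.coe_sum', Finset.sum_apply,
      ContinuousLinearMap.smul_apply, ContinuousLinearMap.proj_apply, smul_eq_mul,
      pderiv_mul, map_add, eval_mul, eval_X, pderiv_X, Pi.single_apply, apply_ite (eval x),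
      map_one, map_zero, add_mul, Finset.sum_add_distrib, ite_mul, one_mul, zero_mul,
      mul_ite, mul_zero, mul_one, Finset.sum_ite_eq, Finset.mem_univ, if_true, Finset.mul_sum]
    rw [add_comm]
    congr 1
    exact Finset.sum_congr rfl fun j _ => by ring

lemma pd_eval {ν μ : ℕ} (P : Fin μ → MvPolynomial (Fin ν) ℝ) (j : Fin ν) (x : Fin ν → ℝ) :
    pd (fun y i => eval y (P i)) j x = fun i => eval x (pderiv j (P i)) := by
  classical
  have h : HasFDerivAt (fun y i => eval y (P i))
      (ContinuousLinearMap.pi fun i =>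
        ∑ j', (eval x (pderiv j' (P i))) • (ContinuousLinearMap.proj j' : (Fin ν → ℝ) →L[ℝ] ℝ)) x :=
    hasFDerivAt_pi.2 fun i => hasFDerivAt_mveval (P i) x
  have hf := h.fderiv
  unfold pd
  rw [hf]
  funext i
  simp only [ContinuousLinearMap.pi_apply, ContinuousLinearMap.coe_sum', Finset.sum_apply,
    ContinuousLinearMap.smul_apply, ContinuousLinearMap.proj_apply, smul_eq_mul,
    Pi.single_apply, mul_ite, mul_one, mul_zero]
  rw [Finset.sum_ite_eq' Finset.univ j (fun j' => eval x (pderiv j' (P i)))]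
  simp

noncomputable def Spoly (ν : ℕ) : MvPolynomial (Fin ν) ℝ := ∑ j, X j ^ 2

lemma pderiv_Spoly {ν : ℕ} (j : Fin ν) : pderiv j (Spoly ν) = 2 * X j := by
  classical
  unfold Spoly
  rw [map_sum]
  rw [Finset.sum_eq_single j]
  · simp [pderiv_pow]
  · intro i _ hij
    simp [pderiv_pow, pderiv_X_of_ne hij]
  · simp

lemma lap_sq {ν : ℕ} (Q : MvPolynomial (Fin ν) ℝ) :
    ∑ j, pderiv j (pderiv j (Q ^ 2)) =
      2 * (∑ j, (pderiv j Q) ^ 2) + 2 * Q * (∑ j, pderiv j (pderiv j Q)) := by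
  rw [Finset.mul_sum, Finset.mul_sum, ← Finset.sum_add_distrib]
  refine Finset.sum_congr rfl fun j _ => ?_
  have h : (Q ^ 2) = Q * Q := sq Q
  rw [h, pderiv_mul, map_add, pderiv_mul, pderiv_mul]
  ring

lemma sm_helper {ν : ℕ} (r : ℕ) (T : MvPolynomial (Fin ν) ℝ) :
    (r : MvPolynomial (Fin ν) ℝ) * (T ^ (r - 1) * T) = (r : MvPolynomial (Fin ν) ℝ) * T ^ r := by
  cases r with
  | zero => simp
  | succ s => rw [Nat.succ_sub_one, ← pow_succ]

lemma lap_Spow {ν : ℕ} (r : ℕ) :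
    ∑ j, pderiv j (pderiv j ((Spoly ν) ^ (r + 1))) =
      ((2 * (r + 1) * (ν + 2 * r) : ℕ) : MvPolynomial (Fin ν) ℝ) * (Spoly ν) ^ r := by
  have h1 : ∀ j : Fin ν, pderiv j ((Spoly ν) ^ (r + 1)) =
      ((r + 1 : ℕ) : MvPolynomial (Fin ν) ℝ) * (Spoly ν) ^ r * (2 * X j) := by
    intro j
    rw [pderiv_pow, Nat.add_sub_cancel, pderiv_Spoly]
  have hc2 : ∀ j : Fin ν, pderiv j ((2 : MvPolynomial (Fin ν) ℝ) * X j) = 2 := by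
    intro j
    rw [pderiv_mul, pderiv_X_self, mul_one]
    have h2n : (2 : MvPolynomial (Fin ν) ℝ) = ((2 : ℕ) : MvPolynomial (Fin ν) ℝ) := by norm_cast
    rw [h2n, Derivation.map_natCast, zero_mul, zero_add]
  have h2 : ∀ j : Fin ν, pderiv j (pderiv j ((Spoly ν) ^ (r + 1))) =
      ((r + 1 : ℕ) : MvPolynomial (Fin ν) ℝ) *
        (((r : ℕ) : MvPolynomial (Fin ν) ℝ) * (Spoly ν) ^ (r - 1) * (2 * X j) * (2 * X j)
          + (Spoly ν) ^ r * 2) := by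
    intro j
    rw [h1, pderiv_mul, pderiv_mul]
    rw [Derivation.map_natCast, hc2 j, pderiv_pow, pderiv_Spoly]
    push_cast
    ring
  have hA : ∑ j : Fin ν, ((r : ℕ) : MvPolynomial (Fin ν) ℝ) * (Spoly ν) ^ (r - 1) * (2 * X j) * (2 * X j)
      = 4 * (((r : ℕ) : MvPolynomial (Fin ν) ℝ) * ((Spoly ν) ^ (r - 1) * (Spoly ν))) := by
    have step : ∀ j : Fin ν, ((r : ℕ) : MvPolynomial (Fin ν) ℝ) * (Spoly ν) ^ (r - 1) * (2 * X j) * (2 * X j)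
        = 4 * (((r : ℕ) : MvPolynomial (Fin ν) ℝ) * ((Spoly ν) ^ (r - 1) * X j ^ 2)) := fun j => by ring
    rw [Finset.sum_congr rfl fun j _ => step j]
    rw [← Finset.mul_sum, ← Finset.mul_sum, ← Finset.mul_sum]
    rfl
  calc ∑ j, pderiv j (pderiv j ((Spoly ν) ^ (r + 1)))
      = ((r + 1 : ℕ) : MvPolynomial (Fin ν) ℝ) *
        ∑ j : Fin ν, (((r : ℕ) : MvPolynomial (Fin ν) ℝ) * (Spoly ν) ^ (r - 1) * (2 * X j) * (2 * X j)
          + (Spoly ν) ^ r * 2) := by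
        rw [Finset.sum_congr rfl fun j _ => h2 j, ← Finset.mul_sum]
    _ = ((r + 1 : ℕ) : MvPolynomial (Fin ν) ℝ) *
        (4 * (((r : ℕ) : MvPolynomial (Fin ν) ℝ) * ((Spoly ν) ^ (r - 1) * (Spoly ν)))
          + (ν : ℕ) * ((Spoly ν) ^ r * 2)) := by
        rw [Finset.sum_add_distrib, hA, Finset.sum_const, card_univ, Fintype.card_fin, nsmul_eq_mul]
    _ = ((2 * (r + 1) * (ν + 2 * r) : ℕ) : MvPolynomial (Fin ν) ℝ) * (Spoly ν) ^ r := by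
        rw [mul_add, sm_helper]
        push_cast
        ring

end Aux

open MvPolynomial in
theorem stmt2 (m n k : ℕ) (hm : 1 ≤ m) (hn : 1 ≤ n) (hk : 1 ≤ k)
    (F : (Fin (m + 1) → ℝ) → (Fin (n + 1) → ℝ))
    (hpoly : ∀ i, ∃ P : MvPolynomial (Fin (m + 1)) ℝ,
      P.IsHomogeneous k ∧ ∀ x, F x i = MvPolynomial.eval x P)
    (hharm : ∀ x i, lap F x i = 0)
    (hsph : ∀ x, ∑ i, (F x i) ^ 2 = (∑ j, (x j) ^ 2) ^ k) :
    (∀ x, frobSq F x = (k : ℝ) * ((m : ℝ) + 2 * k - 1) * (∑ j, (x j) ^ 2) ^ (k - 1)) ∧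
    (∀ x : Fin (m + 1) → ℝ, ∑ j, (x j) ^ 2 = 1 →
      frobSq F x = (k : ℝ) * ((m : ℝ) + 2 * k - 1)) := by
  classical
  choose P hhom hP using hpoly
  have hF : F = fun y i => eval y (P i) := by
    funext y i; exact hP i y
  subst hF
  -- evaluation of Spoly
  have hSev : ∀ x : Fin (m + 1) → ℝ, eval x (Spoly (m + 1)) = ∑ j, (x j) ^ 2 := by
    intro x
    unfold Spoly
    simp [map_sum]
  -- pd in terms of pderiv
  have hpd1 : ∀ j, pd (fun y i => eval y (P i)) j = fun x i => eval x (pderiv j (P i)) := by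
    intro j; funext x; exact pd_eval P j x
  have hpd2 : ∀ j x i, pd (pd (fun y i => eval y (P i)) j) j x i
      = eval x (pderiv j (pderiv j (P i))) := by
    intro j x i
    rw [hpd1 j]
    exact congrFun (pd_eval (fun i => pderiv j (P i)) j x) i
  -- frobSq in terms of polynomials
  have hfrob : ∀ x, frobSq (fun y i => eval y (P i)) x
      = eval x (∑ i, ∑ j, (pderiv j (P i)) ^ 2) := by
    intro x
    unfold frobSq
    rw [map_sum]
    refine Finset.sum_congr rfl fun i _ => ?_
    rw [map_sum]
    refine Finset.sum_congr rfl fun j _ => ?_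
    rw [map_pow, hpd1 j]
  -- harmonicity at polynomial level
  have hharmP : ∀ i, ∑ j, pderiv j (pderiv j (P i)) = 0 := by
    intro i
    apply MvPolynomial.funext
    intro x
    have := hharm x i
    unfold lap at this
    rw [map_zero, map_sum]
    rw [← this]
    exact Finset.sum_congr rfl fun j _ => (hpd2 j x i).symm
  -- sphere condition at polynomial level
  have hsphP : ∑ i, (P i) ^ 2 = (Spoly (m + 1)) ^ k := by
    apply MvPolynomial.funext
    intro x
    rw [map_sum, map_pow, hSev]
    rw [← hsph x]
    exact Finset.sum_congr rfl fun i _ => by rw [map_pow]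
  -- the key polynomial identity
  obtain ⟨r, rfl⟩ : ∃ r, k = r + 1 := ⟨k - 1, (Nat.succ_pred_eq_of_pos hk).symm⟩
  have key : (2 : MvPolynomial (Fin (m + 1)) ℝ) * (∑ i, ∑ j, (pderiv j (P i)) ^ 2)
      = ((2 * (r + 1) * ((m + 1) + 2 * r) : ℕ) : MvPolynomial (Fin (m + 1)) ℝ)
        * (Spoly (m + 1)) ^ r := by
    rw [← lap_Spow r, ← hsphP]
    have : ∑ j, pderiv j (pderiv j (∑ i, (P i) ^ 2))
        = ∑ i, ∑ j, pderiv j (pderiv j ((P i) ^ 2)) := by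
      rw [Finset.sum_comm]
      exact Finset.sum_congr rfl fun j _ => by rw [map_sum, map_sum]
    rw [this]
    have hterm : ∀ i, ∑ j, pderiv j (pderiv j ((P i) ^ 2))
        = 2 * ∑ j, (pderiv j (P i)) ^ 2 := by
      intro i
      rw [lap_sq, hharmP i, mul_zero, add_zero]
    rw [Finset.sum_congr rfl fun i (_ : i ∈ Finset.univ) => hterm i, ← Finset.mul_sum]
  -- evaluate the key identity
  have main : ∀ x : Fin (m + 1) → ℝ, frobSq (fun y i => eval y (P i)) x
      = ((r : ℝ) + 1) * ((m : ℝ) + 2 * r + 1) * (∑ j, (x j) ^ 2) ^ r := by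
    intro x
    have h := congrArg (eval x) key
    rw [map_mul, map_mul, map_pow, hSev] at h
    have h2 : eval x (2 : MvPolynomial (Fin (m + 1)) ℝ) = 2 := by
      norm_num
    have h3 : eval x ((2 * (r + 1) * ((m + 1) + 2 * r) : ℕ) : MvPolynomial (Fin (m + 1)) ℝ)
        = ((2 * (r + 1) * ((m + 1) + 2 * r) : ℕ) : ℝ) := by
      rw [← MvPolynomial.C_eq_coe_nat, eval_C]
    rw [h2, h3] at h
    rw [hfrob x]
    have hc : ((2 * (r + 1) * ((m + 1) + 2 * r) : ℕ) : ℝ)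
        = 2 * (((r : ℝ) + 1) * ((m : ℝ) + 2 * r + 1)) := by
      push_cast; ring
    rw [hc] at h
    linarith
  constructor
  · intro x
    rw [main x]
    have : ((r + 1 : ℕ) : ℝ) * ((m : ℝ) + 2 * (r + 1 : ℕ) - 1) = ((r : ℝ) + 1) * ((m : ℝ) + 2 * r + 1) := by
      push_cast; ring
    rw [Nat.add_sub_cancel]
    push_cast
    ring
  · intro x hx
    rw [main x, hx, one_pow]
    push_cast
    ring
end

section
/- Let m, n ≥ 1, β ∈ ℝ, and let F₁, F₂ : ℝ^{m+1} → ℝ^{n+1} be maps whose components are homogeneous polynomials of degree 2, such that for i = 1, 2 and all x ∈ ℝ^{m+1}: |F_i(x)|² = |x|⁴, |DF_i(x)|² = (m+5)|x|², and |ΔF_i|² = 2(m+1)² (ΔF_i being a constant vector since F_i is quadratic). Define F : ℝ^{m+1} → ℝ^{2n+2} by F(x) = (cos β · F₁(x), sin β · F₂(x)). Then F also satisfies |F(x)|² = |x|⁴, |DF(x)|² = (m+5)|x|², and |ΔF|² = 2(m+1)² for all x. -/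
open Real

section Blocks

variable {k a b : ℕ}

theorem contDiff_of_apply_eq_eval {G : (Fin k → ℝ) → Fin a → ℝ}
    (hG : ∀ i, ∃ P : MvPolynomial (Fin k) ℝ, ∀ x, G x i = MvPolynomial.eval x P)
    {n : WithTop ℕ∞} : ContDiff ℝ n G := by
  refine contDiff_pi.2 fun i => ?_
  obtain ⟨P, hP⟩ := hG i
  simpa only [hP] using (AnalyticOnNhd.eval_mvPolynomial P).contDiff

theorem pd_apply {G : (Fin k → ℝ) → Fin a → ℝ} {x : Fin k → ℝ} (hG : DifferentiableAt ℝ G x)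
    (j : Fin k) (i : Fin a) :
    pd G j x i = fderiv ℝ (fun y => G y i) x (Pi.single j 1) := by
  rw [pd, fderiv_pi (differentiableAt_pi.1 hG)]
  rfl

theorem pd_const_smul (c : ℝ) (G : (Fin k → ℝ) → Fin a → ℝ) (j : Fin k) (x : Fin k → ℝ) :
    pd (fun y => c • G y) j x = c • pd G j x := by
  change fderiv ℝ (c • G) x _ = _
  rw [fderiv_const_smul_field]
  rfl

theorem differentiableAt_finAppend {G : (Fin k → ℝ) → Fin a → ℝ} {H : (Fin k → ℝ) → Fin b → ℝ}
    {x : Fin k → ℝ} (hG : DifferentiableAt ℝ G x) (hH : DifferentiableAt ℝ H x) :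
    DifferentiableAt ℝ (fun y => Fin.append (G y) (H y)) x := by
  refine differentiableAt_pi.2 fun i => Fin.addCases (fun i => ?_) (fun i => ?_) i
  · simpa only [Fin.append_left] using differentiableAt_pi.1 hG i
  · simpa only [Fin.append_right] using differentiableAt_pi.1 hH i

theorem pd_finAppend {G : (Fin k → ℝ) → Fin a → ℝ} {H : (Fin k → ℝ) → Fin b → ℝ}
    {x : Fin k → ℝ} (hG : DifferentiableAt ℝ G x) (hH : DifferentiableAt ℝ H x) (j : Fin k) :
    pd (fun y => Fin.append (G y) (H y)) j x = Fin.append (pd G j x) (pd H j x) := by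
  funext i
  rw [pd_apply (differentiableAt_finAppend hG hH)]
  refine Fin.addCases (fun i => ?_) (fun i => ?_) i
  · simp only [Fin.append_left, pd_apply hG]
  · simp only [Fin.append_right, pd_apply hH]

theorem pd_finAppend_smul (c s : ℝ) {G : (Fin k → ℝ) → Fin a → ℝ} {H : (Fin k → ℝ) → Fin b → ℝ}
    {x : Fin k → ℝ} (hG : DifferentiableAt ℝ G x) (hH : DifferentiableAt ℝ H x) (j : Fin k) :
    pd (fun y => Fin.append (c • G y) (s • H y)) j x
      = Fin.append (c • pd G j x) (s • pd H j x) := by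
  rw [pd_finAppend (G := fun y => c • G y) (H := fun y => s • H y) (hG.const_smul c)
    (hH.const_smul s), pd_const_smul, pd_const_smul]

theorem differentiable_pd {G : (Fin k → ℝ) → Fin a → ℝ} (hG : ContDiff ℝ 2 G) (j : Fin k) :
    Differentiable ℝ (pd G j) :=
  ((hG.fderiv_right (m := 1) (by norm_num)).clm_apply contDiff_const).differentiable one_ne_zero

theorem lap_finAppend_smul (c s : ℝ) {G : (Fin k → ℝ) → Fin a → ℝ} {H : (Fin k → ℝ) → Fin b → ℝ}
    (hG : ContDiff ℝ 2 G) (hH : ContDiff ℝ 2 H) (x : Fin k → ℝ) :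
    lap (fun y => Fin.append (c • G y) (s • H y)) x = Fin.append (c • lap G x) (s • lap H x) := by
  have hpd : ∀ j, pd (fun y => Fin.append (c • G y) (s • H y)) j
      = fun y => Fin.append (c • pd G j y) (s • pd H j y) := fun j => funext fun y =>
    pd_finAppend_smul c s (hG.differentiable two_ne_zero y) (hH.differentiable two_ne_zero y) j
  funext i
  simp only [lap, hpd, pd_finAppend_smul c s (differentiable_pd hG _ x) (differentiable_pd hH _ x)]
  refine Fin.addCases (fun i => ?_) (fun i => ?_) i
  · simp only [Fin.append_left, Pi.smul_apply, smul_eq_mul, lap, Finset.mul_sum]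
  · simp only [Fin.append_right, Pi.smul_apply, smul_eq_mul, lap, Finset.mul_sum]

theorem sum_sq_finAppend_smul (c s : ℝ) (u : Fin a → ℝ) (v : Fin b → ℝ) :
    ∑ i, Fin.append (c • u) (s • v) i ^ 2 = c ^ 2 * ∑ i, u i ^ 2 + s ^ 2 * ∑ i, v i ^ 2 := by
  simp only [Fin.sum_univ_add, Fin.append_left, Fin.append_right, Pi.smul_apply, smul_eq_mul,
    mul_pow, Finset.mul_sum]

theorem frobSq_finAppend_smul (c s : ℝ) {G : (Fin k → ℝ) → Fin a → ℝ}
    {H : (Fin k → ℝ) → Fin b → ℝ} {x : Fin k → ℝ} (hG : DifferentiableAt ℝ G x)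
    (hH : DifferentiableAt ℝ H x) :
    frobSq (fun y => Fin.append (c • G y) (s • H y)) x
      = c ^ 2 * frobSq G x + s ^ 2 * frobSq H x := by
  simp only [frobSq, pd_finAppend_smul c s hG hH, Fin.sum_univ_add, Fin.append_left,
    Fin.append_right, Pi.smul_apply, smul_eq_mul, mul_pow, Finset.mul_sum]

end Blocks

theorem cos_sq_mul_add_sin_sq_mul (β a : ℝ) : cos β ^ 2 * a + sin β ^ 2 * a = a := by
  rw [← add_mul, cos_sq_add_sin_sq, one_mul]

theorem stmt9_general (m n : ℕ) (β : ℝ)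
    (F₁ F₂ : (Fin (m + 1) → ℝ) → (Fin (n + 1) → ℝ))
    (hpoly₁ : ∀ i, ∃ P : MvPolynomial (Fin (m + 1)) ℝ,
      P.IsHomogeneous 2 ∧ ∀ x, F₁ x i = MvPolynomial.eval x P)
    (hpoly₂ : ∀ i, ∃ P : MvPolynomial (Fin (m + 1)) ℝ,
      P.IsHomogeneous 2 ∧ ∀ x, F₂ x i = MvPolynomial.eval x P)
    (hsph₁ : ∀ x, ∑ i, (F₁ x i) ^ 2 = (∑ j, (x j) ^ 2) ^ 2)
    (hsph₂ : ∀ x, ∑ i, (F₂ x i) ^ 2 = (∑ j, (x j) ^ 2) ^ 2)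
    (hfrob₁ : ∀ x, frobSq F₁ x = ((m : ℝ) + 5) * ∑ j, (x j) ^ 2)
    (hfrob₂ : ∀ x, frobSq F₂ x = ((m : ℝ) + 5) * ∑ j, (x j) ^ 2)
    (hlap₁ : ∀ x, ∑ i, (lap F₁ x i) ^ 2 = 2 * ((m : ℝ) + 1) ^ 2)
    (hlap₂ : ∀ x, ∑ i, (lap F₂ x i) ^ 2 = 2 * ((m : ℝ) + 1) ^ 2)
    (F : (Fin (m + 1) → ℝ) → (Fin (n + 1 + (n + 1)) → ℝ))
    (hF : ∀ x, F x =
      Fin.append (fun i => Real.cos β * F₁ x i) (fun i => Real.sin β * F₂ x i)) :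
    (∀ x, ∑ i, (F x i) ^ 2 = (∑ j, (x j) ^ 2) ^ 2) ∧
    (∀ x, frobSq F x = ((m : ℝ) + 5) * ∑ j, (x j) ^ 2) ∧
    (∀ x, ∑ i, (lap F x i) ^ 2 = 2 * ((m : ℝ) + 1) ^ 2) := by
  obtain rfl : F = fun y => Fin.append (cos β • F₁ y) (sin β • F₂ y) := funext hF
  have h₁ : ContDiff ℝ 2 F₁ := contDiff_of_apply_eq_eval fun i => (hpoly₁ i).imp fun _ => And.right
  have h₂ : ContDiff ℝ 2 F₂ := contDiff_of_apply_eq_eval fun i => (hpoly₂ i).imp fun _ => And.right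
  refine ⟨fun x => ?_, fun x => ?_, fun x => ?_⟩
  · rw [sum_sq_finAppend_smul, hsph₁, hsph₂, cos_sq_mul_add_sin_sq_mul]
  · rw [frobSq_finAppend_smul _ _ (h₁.differentiable two_ne_zero x)
      (h₂.differentiable two_ne_zero x), hfrob₁, hfrob₂, cos_sq_mul_add_sin_sq_mul]
  · rw [lap_finAppend_smul _ _ h₁ h₂, sum_sq_finAppend_smul, hlap₁, hlap₂,
      cos_sq_mul_add_sin_sq_mul]

theorem stmt9 (m n : ℕ) (hm : 1 ≤ m) (hn : 1 ≤ n) (β : ℝ)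
    (F₁ F₂ : (Fin (m + 1) → ℝ) → (Fin (n + 1) → ℝ))
    (hpoly₁ : ∀ i, ∃ P : MvPolynomial (Fin (m + 1)) ℝ,
      P.IsHomogeneous 2 ∧ ∀ x, F₁ x i = MvPolynomial.eval x P)
    (hpoly₂ : ∀ i, ∃ P : MvPolynomial (Fin (m + 1)) ℝ,
      P.IsHomogeneous 2 ∧ ∀ x, F₂ x i = MvPolynomial.eval x P)
    (hsph₁ : ∀ x, ∑ i, (F₁ x i) ^ 2 = (∑ j, (x j) ^ 2) ^ 2)
    (hsph₂ : ∀ x, ∑ i, (F₂ x i) ^ 2 = (∑ j, (x j) ^ 2) ^ 2)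
    (hfrob₁ : ∀ x, frobSq F₁ x = ((m : ℝ) + 5) * ∑ j, (x j) ^ 2)
    (hfrob₂ : ∀ x, frobSq F₂ x = ((m : ℝ) + 5) * ∑ j, (x j) ^ 2)
    (hlap₁ : ∀ x, ∑ i, (lap F₁ x i) ^ 2 = 2 * ((m : ℝ) + 1) ^ 2)
    (hlap₂ : ∀ x, ∑ i, (lap F₂ x i) ^ 2 = 2 * ((m : ℝ) + 1) ^ 2)
    (F : (Fin (m + 1) → ℝ) → (Fin (n + 1 + (n + 1)) → ℝ))
    (hF : ∀ x, F x =
      Fin.append (fun i => Real.cos β * F₁ x i) (fun i => Real.sin β * F₂ x i)) :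
    (∀ x, ∑ i, (F x i) ^ 2 = (∑ j, (x j) ^ 2) ^ 2) ∧
    (∀ x, frobSq F x = ((m : ℝ) + 5) * ∑ j, (x j) ^ 2) ∧
    (∀ x, ∑ i, (lap F x i) ^ 2 = 2 * ((m : ℝ) + 1) ^ 2) :=
  stmt9_general m n β F₁ F₂ hpoly₁ hpoly₂ hsph₁ hsph₂ hfrob₁ hfrob₂ hlap₁ hlap₂ F hF
end

section
/- Let n ≥ 2 and c, γ ∈ ℝⁿ with |c| = 1, ⟨c,γ⟩ = 0, and |γ|² = 1/2. Define ρ : ℝ → ℝ^{n+1} by ρ(θ) = (cos²θ, c¹sin²θ + γ¹sin(2θ), …, cⁿsin²θ + γⁿsin(2θ)). Set f₁ = (1/2, −c/2), f₂ = (0, γ), f₃ = (1/2, c/2) ∈ ℝ^{n+1}. Then: (i) f₁, f₂, f₃ are pairwise orthogonal and |f₁|² = |f₂|² = |f₃|² = 1/2; (ii) ρ(θ) = f₃ + cos(2θ)·f₁ + sin(2θ)·f₂ for all θ; and (iii) |ρ'(θ)| = √2 for all θ. In particular, the image of ρ is a circle of radius 1/√2 lying on the unit sphere Sⁿ ⊂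 ℝ^{n+1}. -/
/-!
Halving angles turns `cos² θ` and `sin² θ` into `1/2 ± cos (2θ) / 2`, which makes `ρ` affine in
`(cos 2θ, sin 2θ)`: `ρ = f₃ + cos (2θ) f₁ + sin (2θ) f₂`. The hypotheses on `c` and `γ` make
`f₁, f₂` orthogonal of squared length `1/2`, so `ρ` runs, at angular speed `2`, around a circle of
radius `1/√2`; its speed is therefore `2 / √2 = √2`.
-/

open Real

theorem hasDerivAt_add_cos_mul_add_sin_mul (p u v ω θ : ℝ) :
    HasDerivAt (fun θ' => p + cos (ω * θ') * u + sin (ω * θ') * v)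
      (ω * (cos (ω * θ) * v - sin (ω * θ) * u)) θ := by
  have hω : HasDerivAt (fun x : ℝ => ω * x) ω θ := by
    simpa using (hasDerivAt_id θ).const_mul ω
  have hcos := ((hasDerivAt_cos (ω * θ)).comp θ hω).mul_const u
  have hsin := ((hasDerivAt_sin (ω * θ)).comp θ hω).mul_const v
  exact (((hasDerivAt_const θ p).add hcos).add hsin).congr_deriv (by ring)

theorem sum_deriv_sq_add_cos_mul_add_sin_mul {ι : Type*} [Fintype ι] (p u v : ι → ℝ) (ω s θ : ℝ)
    (hu : ∑ i, u i ^ 2 = s) (hv : ∑ i, v i ^ 2 = s) (huv : ∑ i, u i * v i = 0) :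
    ∑ i, deriv (fun θ' => p i + cos (ω * θ') * u i + sin (ω * θ') * v i) θ ^ 2 = ω ^ 2 * s := by
  simp only [fun i => (hasDerivAt_add_cos_mul_add_sin_mul (p i) (u i) (v i) ω θ).deriv]
  calc ∑ i, (ω * (cos (ω * θ) * v i - sin (ω * θ) * u i)) ^ 2
      = ω ^ 2 * (cos (ω * θ) ^ 2 * ∑ i, v i ^ 2 + sin (ω * θ) ^ 2 * ∑ i, u i ^ 2
          - 2 * cos (ω * θ) * sin (ω * θ) * ∑ i, u i * v i) := by
        simp only [Finset.mul_sum, ← Finset.sum_sub_distrib, ← Finset.sum_add_distrib]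
        exact Finset.sum_congr rfl fun i _ => by ring
    _ = ω ^ 2 * s := by
        rw [hu, hv, huv]
        linear_combination ω ^ 2 * s * sin_sq_add_cos_sq (ω * θ)

theorem Fin.sum_cons_mul_cons {R : Type*} [NonUnitalNonAssocSemiring R] {n : ℕ} (a b : R)
    (v w : Fin n → R) :
    ∑ i, (Fin.cons a v : Fin (n + 1) → R) i * (Fin.cons b w : Fin (n + 1) → R) i
      = a * b + ∑ j, v j * w j := by
  simp only [Fin.sum_univ_succ, Fin.cons_zero, Fin.cons_succ]

theorem Fin.sum_cons_sq {R : Type*} [CommSemiring R] {n : ℕ} (a : R) (v : Fin n → R) :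
    ∑ i, (Fin.cons a v : Fin (n + 1) → R) i ^ 2 = a ^ 2 + ∑ j, v j ^ 2 := by
  simp only [Fin.sum_univ_succ, Fin.cons_zero, Fin.cons_succ]

theorem stmt12_general (n : ℕ) (c γ : Fin n → ℝ)
    (hc : ∑ j, (c j) ^ 2 = 1)
    (hcγ : ∑ j, c j * γ j = 0)
    (hγ : ∑ j, (γ j) ^ 2 = 1 / 2)
    (ρ : ℝ → Fin (n + 1) → ℝ)
    (hρ : ∀ θ, ρ θ = Fin.cons (Real.cos θ ^ 2)
      (fun i => c i * Real.sin θ ^ 2 + γ i * Real.sin (2 * θ)))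
    (f₁ f₂ f₃ : Fin (n + 1) → ℝ)
    (hf₁ : f₁ = Fin.cons (1 / 2) (fun i => -(c i) / 2))
    (hf₂ : f₂ = Fin.cons 0 γ)
    (hf₃ : f₃ = Fin.cons (1 / 2) (fun i => c i / 2)) :
    (∑ i, f₁ i * f₂ i = 0 ∧ ∑ i, f₁ i * f₃ i = 0 ∧ ∑ i, f₂ i * f₃ i = 0 ∧
      ∑ i, (f₁ i) ^ 2 = 1 / 2 ∧ ∑ i, (f₂ i) ^ 2 = 1 / 2 ∧ ∑ i, (f₃ i) ^ 2 = 1 / 2) ∧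
    (∀ θ : ℝ, ∀ i, ρ θ i = f₃ i + Real.cos (2 * θ) * f₁ i + Real.sin (2 * θ) * f₂ i) ∧
    (∀ θ : ℝ, Real.sqrt (∑ i, (deriv (fun θ' => ρ θ' i) θ) ^ 2) = Real.sqrt 2) := by
  have h12 : ∑ i, f₁ i * f₂ i = 0 := by
    rw [hf₁, hf₂, Fin.sum_cons_mul_cons,
      Finset.sum_congr rfl fun j _ => (by ring : -c j / 2 * γ j = -(1 / 2) * (c j * γ j)),
      ← Finset.mul_sum, hcγ]
    norm_num
  have h1 : ∑ i, f₁ i ^ 2 = 1 / 2 := by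
    simp only [hf₁, Fin.sum_cons_sq, div_pow, neg_sq, ← Finset.sum_div, hc]
    norm_num
  have h2 : ∑ i, f₂ i ^ 2 = 1 / 2 := by
    simp only [hf₂, Fin.sum_cons_sq, hγ]
    ring
  have hρ_circle : ∀ θ i, ρ θ i = f₃ i + cos (2 * θ) * f₁ i + sin (2 * θ) * f₂ i := by
    intro θ i
    rw [hρ, hf₁, hf₂, hf₃]
    cases i using Fin.cases
    · simp only [Fin.cons_zero, cos_sq]
      ring
    · simp only [Fin.cons_succ, sin_sq_eq_half_sub]
      ring
  refine ⟨⟨h12, ?_, ?_, h1, h2, ?_⟩, hρ_circle, fun θ => ?_⟩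
  · rw [hf₁, hf₃, Fin.sum_cons_mul_cons,
      Finset.sum_congr rfl fun j _ => (by ring : -c j / 2 * (c j / 2) = -(1 / 4) * c j ^ 2),
      ← Finset.mul_sum, hc]
    norm_num
  · rw [hf₂, hf₃, Fin.sum_cons_mul_cons,
      Finset.sum_congr rfl fun j _ => (by ring : γ j * (c j / 2) = 1 / 2 * (c j * γ j)),
      ← Finset.mul_sum, hcγ]
    norm_num
  · simp only [hf₃, Fin.sum_cons_sq, div_pow, ← Finset.sum_div, hc]
    norm_num
  · simp only [hρ_circle, sum_deriv_sq_add_cos_mul_add_sin_mul f₃ f₁ f₂ 2 (1 / 2) θ h1 h2 h12]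
    norm_num

theorem stmt12 (n : ℕ) (hn : 2 ≤ n) (c γ : Fin n → ℝ)
    (hc : ∑ j, (c j) ^ 2 = 1)
    (hcγ : ∑ j, c j * γ j = 0)
    (hγ : ∑ j, (γ j) ^ 2 = 1 / 2)
    (ρ : ℝ → Fin (n + 1) → ℝ)
    (hρ : ∀ θ, ρ θ = Fin.cons (Real.cos θ ^ 2)
      (fun i => c i * Real.sin θ ^ 2 + γ i * Real.sin (2 * θ)))
    (f₁ f₂ f₃ : Fin (n + 1) → ℝ)
    (hf₁ : f₁ = Fin.cons (1 / 2) (fun i => -(c i) / 2))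
    (hf₂ : f₂ = Fin.cons 0 γ)
    (hf₃ : f₃ = Fin.cons (1 / 2) (fun i => c i / 2)) :
    (∑ i, f₁ i * f₂ i = 0 ∧ ∑ i, f₁ i * f₃ i = 0 ∧ ∑ i, f₂ i * f₃ i = 0 ∧
      ∑ i, (f₁ i) ^ 2 = 1 / 2 ∧ ∑ i, (f₂ i) ^ 2 = 1 / 2 ∧ ∑ i, (f₃ i) ^ 2 = 1 / 2) ∧
    (∀ θ : ℝ, ∀ i, ρ θ i = f₃ i + Real.cos (2 * θ) * f₁ i + Real.sin (2 * θ) * f₂ i) ∧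
    (∀ θ : ℝ, Real.sqrt (∑ i, (deriv (fun θ' => ρ θ' i) θ) ^ 2) = Real.sqrt 2) :=
  stmt12_general n c γ hc hcγ hγ ρ hρ f₁ f₂ f₃ hf₁ hf₂ hf₃
end

section
/- Let γ₁, γ₂, γ₃, γ₄ be nonzero vectors in ℝ³ with ⟨γ₁,γ₂⟩ = 0, ⟨γ₁,γ₃⟩ = 0, ⟨γ₂,γ₄⟩ = 0, ⟨γ₃,γ₄⟩ = 0, and ⟨γ₁,γ₄⟩·|γ₂|·|γ₃| + ⟨γ₂,γ₃⟩·|γ₁|·|γ₄| = 0. Then either (⟨γ₂,γ₃⟩ = |γ₂||γ₃| and ⟨γ₁,γ₄⟩ = −|γ₁||γ₄|) or (⟨γ₂,γ₃⟩ = −|γ₂||γ₃| and ⟨γ₁,γ₄⟩ = |γ₁||γ₄|); in particular γ₂ and γ₃ are parallel, and γ₁ and γ₄ are parallel. -/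
open RealInnerProductSpace

/-!
STATEMENT 14: If γ₁, γ₂, γ₃, γ₄ are nonzero vectors in ℝ³ with
γ₁ ⊥ γ₂, γ₁ ⊥ γ₃, γ₂ ⊥ γ₄, γ₃ ⊥ γ₄ and
⟨γ₁,γ₄⟩|γ₂||γ₃| + ⟨γ₂,γ₃⟩|γ₁||γ₄| = 0, then either
(⟨γ₂,γ₃⟩ = |γ₂||γ₃| and ⟨γ₁,γ₄⟩ = −|γ₁||γ₄|) or
(⟨γ₂,γ₃⟩ = −|γ₂||γ₃| and ⟨γ₁,γ₄⟩ = |γ₁||γ₄|);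
in particular γ₂ ∥ γ₃ and γ₁ ∥ γ₄.
-/

theorem stmt14 (γ₁ γ₂ γ₃ γ₄ : EuclideanSpace ℝ (Fin 3))
    (h₁ : γ₁ ≠ 0) (h₂ : γ₂ ≠ 0) (h₃ : γ₃ ≠ 0) (h₄ : γ₄ ≠ 0)
    (h12 : ⟪γ₁, γ₂⟫ = 0) (h13 : ⟪γ₁, γ₃⟫ = 0)
    (h24 : ⟪γ₂, γ₄⟫ = 0) (h34 : ⟪γ₃, γ₄⟫ = 0)
    (hsum : ⟪γ₁, γ₄⟫ * ‖γ₂‖ * ‖γ₃‖ + ⟪γ₂, γ₃⟫ * ‖γ₁‖ * ‖γ₄‖ = 0) :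
    ((⟪γ₂, γ₃⟫ = ‖γ₂‖ * ‖γ₃‖ ∧ ⟪γ₁, γ₄⟫ = -(‖γ₁‖ * ‖γ₄‖)) ∨
      (⟪γ₂, γ₃⟫ = -(‖γ₂‖ * ‖γ₃‖) ∧ ⟪γ₁, γ₄⟫ = ‖γ₁‖ * ‖γ₄‖)) ∧
    (∃ t : ℝ, γ₃ = t • γ₂) ∧ (∃ s : ℝ, γ₄ = s • γ₁) := by
  have hn1 : (0:ℝ) < ‖γ₁‖ := norm_pos_iff.2 h₁
  have hn2 : (0:ℝ) < ‖γ₂‖ := norm_pos_iff.2 h₂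
  have hn3 : (0:ℝ) < ‖γ₃‖ := norm_pos_iff.2 h₃
  have hn4 : (0:ℝ) < ‖γ₄‖ := norm_pos_iff.2 h₄
  -- Step 1: γ₃ is a multiple of γ₂.
  have key : ∃ t : ℝ, t ≠ 0 ∧ γ₃ = t • γ₂ := by
    by_cases heq : ‖(⟪γ₂, γ₃⟫ : ℝ)‖ = ‖γ₂‖ * ‖γ₃‖
    · exact (norm_inner_eq_norm_iff h₂ h₃).1 heq
    · exfalso
      have hnotmul : ∀ t : ℝ, γ₃ ≠ t • γ₂ := by
        intro t ht
        rcases eq_or_ne t 0 with rfl | ht0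
        · exact h₃ (by simpa using ht)
        · exact heq ((norm_inner_eq_norm_iff h₂ h₃).2 ⟨t, ht0, ht⟩)
      have hli : LinearIndependent ℝ ![γ₂, γ₃] := by
        rw [linearIndependent_fin2]
        refine ⟨by simpa using h₃, fun a ha => ?_⟩
        simp only [Matrix.cons_val_one, Matrix.head_cons, Matrix.cons_val_zero] at ha
        have ha0 : a ≠ 0 := by rintro rfl; simp at ha; exact h₂ ha.symm
        exact hnotmul a⁻¹ (by rw [← ha, smul_smul, inv_mul_cancel₀ ha0, one_smul])
      set K : Submodule ℝ (EuclideanSpace ℝ (Fin 3)) :=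
        Submodule.span ℝ (Set.range ![γ₂, γ₃]) with hKdef
      have hK2 : Module.finrank ℝ K = 2 := by
        rw [hKdef, finrank_span_eq_card hli]; simp
      have hKo1 : Module.finrank ℝ Kᗮ = 1 := by
        have := Submodule.finrank_add_finrank_orthogonal K
        rw [hK2, finrank_euclideanSpace_fin] at this
        omega
      have hmem : ∀ x : EuclideanSpace ℝ (Fin 3), ⟪x, γ₂⟫ = 0 → ⟪x, γ₃⟫ = 0 → x ∈ Kᗮ := by
        intro x hx2 hx3
        rw [Submodule.mem_orthogonal]
        intro u hu
        induction hu using Submodule.span_induction with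
        | mem v hv =>
            rcases hv with ⟨i, rfl⟩
            fin_cases i
            · rw [real_inner_comm]; exact hx2
            · rw [real_inner_comm]; exact hx3
        | zero => simp
        | add a b _ _ ha hb => rw [inner_add_left, ha, hb, add_zero]
        | smul c a _ ha => rw [real_inner_smul_left, ha, mul_zero]
      have hγ₁ : γ₁ ∈ Kᗮ := hmem γ₁ h12 h13
      have hγ₄ : γ₄ ∈ Kᗮ :=
        hmem γ₄ (by rw [real_inner_comm]; exact h24) (by rw [real_inner_comm]; exact h34)
      have hle : Submodule.span ℝ {γ₁} ≤ Kᗮ := by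
        rw [Submodule.span_le, Set.singleton_subset_iff]; exact hγ₁
      have hspan : Submodule.span ℝ {γ₁} = Kᗮ := by
        apply Submodule.eq_of_le_of_finrank_eq hle
        rw [finrank_span_singleton h₁, hKo1]
      rw [← hspan, Submodule.mem_span_singleton] at hγ₄
      obtain ⟨s, hs⟩ := hγ₄
      have hs0 : s ≠ 0 := by rintro rfl; simp at hs; exact h₄ hs.symm
      have hi14 : ⟪γ₁, γ₄⟫ = s * ‖γ₁‖ ^ 2 := by
        rw [← hs, real_inner_smul_right, real_inner_self_eq_norm_sq]
      have hn4' : ‖γ₄‖ = |s| * ‖γ₁‖ := by rw [← hs, norm_smul, Real.norm_eq_abs]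
      rw [hi14, hn4'] at hsum
      apply heq
      have habs : |s| ≠ 0 := abs_ne_zero.2 hs0
      have hA : (0:ℝ) < ‖γ₁‖ ^ 2 := by positivity
      have h' : (⟪γ₂, γ₃⟫ * |s|) * ‖γ₁‖ ^ 2 = (-(s * (‖γ₂‖ * ‖γ₃‖))) * ‖γ₁‖ ^ 2 := by
        linear_combination hsum
      have hcancel : ⟪γ₂, γ₃⟫ * |s| = -(s * (‖γ₂‖ * ‖γ₃‖)) := mul_right_cancel₀ hA.ne' h'
      have h23 : ⟪γ₂, γ₃⟫ = -(s / |s|) * (‖γ₂‖ * ‖γ₃‖) := by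
        apply mul_right_cancel₀ habs
        rw [hcancel]
        field_simp
      rw [h23, Real.norm_eq_abs, abs_mul, abs_neg, abs_div, abs_abs, div_self (abs_ne_zero.2 hs0),
        abs_of_pos (by positivity : (0:ℝ) < ‖γ₂‖ * ‖γ₃‖), one_mul]
  -- Step 2: conclude.
  obtain ⟨t, ht0, rfl⟩ := key
  have hi23 : ⟪γ₂, t • γ₂⟫ = t * ‖γ₂‖ ^ 2 := by
    rw [real_inner_smul_right, real_inner_self_eq_norm_sq]
  have hn3' : ‖t • γ₂‖ = |t| * ‖γ₂‖ := by rw [norm_smul, Real.norm_eq_abs]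
  rw [hi23, hn3'] at hsum ⊢
  have habs : (0:ℝ) < |t| := abs_pos.2 ht0
  have hB : (0:ℝ) < ‖γ₂‖ ^ 2 := by positivity
  have hkey : ⟪γ₁, γ₄⟫ * |t| = -(t * (‖γ₁‖ * ‖γ₄‖)) := by
    apply mul_right_cancel₀ hB.ne'
    linear_combination hsum
  have h14abs : ‖(⟪γ₁, γ₄⟫ : ℝ)‖ = ‖γ₁‖ * ‖γ₄‖ := by
    rw [Real.norm_eq_abs]
    have := congrArg abs hkey
    rw [abs_mul, abs_abs, abs_neg, abs_mul, abs_of_pos (by positivity : (0:ℝ) < ‖γ₁‖ * ‖γ₄‖)] at this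
    exact mul_right_cancel₀ (ne_of_gt habs) (by rw [this, mul_comm])
  obtain ⟨s, _, hs⟩ := (norm_inner_eq_norm_iff h₁ h₄).1 h14abs
  refine ⟨?_, ⟨t, rfl⟩, ⟨s, hs⟩⟩
  rcases lt_or_gt_of_ne ht0 with htneg | htpos
  · right
    have : |t| = -t := abs_of_neg htneg
    constructor
    · rw [this]; ring
    · rw [this] at hkey
      exact mul_left_cancel₀ ht0 (by linear_combination (-1 : ℝ) * hkey)
  · left
    have : |t| = t := abs_of_pos htpos
    constructor
    · rw [this]; ring
    · rw [this] at hkey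
      exact mul_left_cancel₀ ht0 (by linear_combination hkey)
end
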